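/- In the bosonized algebra with relations gx = xg, gy = yg + xg, yx = xy − (1/2)x², for all n, ℓ ≥ 0 one has g^n y^ℓ = ∑_{k=0}^{ℓ} binom(ℓ,k) (−1)^k ([−2n]^{[k]} / 2^k) x^k y^{ℓ−k} g^n. -/

import Mathlib

/-!
Since `g` commutes with `x` and `g y = (y + x) g`, conjugating by `g^n` shifts `y` to `y + n x`,
so `g^n y^ℓ = (y + n x)^ℓ g^n`. Moving `y` rightwards past powers of `x` gives
`y x^i = x^i y - (i/2) x^(i+1)`, hence `(y + c x) · x^i y^j = x^i y^(j+1) + (c - i/2) x^(i+1) y^j`.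
This is Pascal's recurrence with the weights `∏_{i<k} (c - i/2)`, so
`(y + c x)^ℓ = ∑ C(ℓ,k) ∏_{i<k} (c - i/2) x^k y^(ℓ-k)`, and for `c = n` this product is
`(-1)^k [-2n]^{[k]} / 2^k`.
-/

/-- The raising factorial `[t]^{[k]} = t(t+1)⋯(t+k-1)`. -/
noncomputable def raise {K : Type*} [Field K] (t : K) (k : ℕ) : K :=
  ∏ i ∈ Finset.range k, (t + i)

open Finset

theorem neg_one_pow_mul_raise_neg_two_mul_div {K : Type*} [Field K] (h2 : (2 : K) ≠ 0)
    (c : K) (k : ℕ) :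
    (-1) ^ k * raise (-2 * c) k / 2 ^ k = ∏ i ∈ range k, (c - i / 2) := by
  rw [raise, pow_eq_prod_const, pow_eq_prod_const, ← prod_mul_distrib, ← prod_div_distrib]
  refine prod_congr rfl fun i _ => ?_
  field_simp
  ring

theorem semiconjBy_pow_add_nsmul {A : Type*} [Ring A] {x y g : A}
    (hgx : g * x = x * g) (hgy : g * y = y * g + x * g) (n : ℕ) :
    SemiconjBy (g ^ n) y (y + n • x) := by
  induction n with
  | zero => simp [SemiconjBy]
  | succ n ih =>
    have hg : SemiconjBy g (y + n • x) (y + (n + 1) • x) := by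
      rw [add_nsmul, one_nsmul, add_comm (n • x), ← add_assoc]
      exact SemiconjBy.add_right (by rw [SemiconjBy, add_mul]; exact hgy)
        (Commute.smul_right hgx n)
    rw [pow_succ']
    exact hg.mul_left ih

section Normalization

variable {K : Type*} [Field K] {A : Type*} [Ring A] [Algebra K A] {x y : A}

theorem mul_pow_eq_pow_mul_sub (hrel : y * x = x * y - (1/2 : K) • x ^ 2) (i : ℕ) :
    y * x ^ i = x ^ i * y - ((i : K) / 2) • x ^ (i + 1) := by
  induction i with
  | zero => simp
  | succ i ih =>
    rw [pow_succ, ← mul_assoc, ih, sub_mul, mul_assoc, hrel, smul_mul_assoc, ← pow_succ,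
      mul_sub, ← mul_assoc, ← pow_succ, mul_smul_comm, ← pow_add, sub_sub, ← add_smul]
    congr 2
    push_cast
    ring

theorem add_smul_mul_pow_mul_pow (hrel : y * x = x * y - (1/2 : K) • x ^ 2) (c : K) (i j : ℕ) :
    (y + c • x) * (x ^ i * y ^ j)
      = x ^ i * y ^ (j + 1) + (c - i / 2) • (x ^ (i + 1) * y ^ j) := by
  rw [add_mul, ← mul_assoc, mul_pow_eq_pow_mul_sub hrel, sub_mul, mul_assoc, ← pow_succ',
    smul_mul_assoc, smul_mul_assoc, ← mul_assoc, ← pow_succ', sub_smul]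
  abel

theorem add_smul_pow_eq_sum_antidiagonal (hrel : y * x = x * y - (1/2 : K) • x ^ 2)
    (c : K) (ℓ : ℕ) :
    (y + c • x) ^ ℓ = ∑ ij ∈ antidiagonal ℓ,
      ℓ.choose ij.1 • (∏ i ∈ range ij.1, (c - i / 2)) • (x ^ ij.1 * y ^ ij.2) := by
  induction ℓ with
  | zero => simp
  | succ ℓ ih =>
    rw [sum_antidiagonal_choose_succ_nsmul
      (fun i j => (∏ k ∈ range i, (c - k / 2)) • (x ^ i * y ^ j)), pow_succ', ih, mul_sum,
      ← sum_add_distrib]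
    refine sum_congr rfl fun ⟨i, j⟩ hij => ?_
    rw [ℓ.choose_symm_of_eq_add (mem_antidiagonal.1 hij).symm, mul_smul_comm, mul_smul_comm,
      add_smul_mul_pow_mul_pow hrel, smul_add, smul_add, smul_smul, prod_range_succ]

end Normalization

theorem stmt3 (K : Type*) [Field K] (h2 : (2 : K) ≠ 0)
    (A : Type*) [Ring A] [Algebra K A] (x y g : A)
    (hgx : g * x = x * g) (hgy : g * y = y * g + x * g)
    (hrel : y * x = x * y - (1/2 : K) • x ^ 2) (n ℓ : ℕ) :
    g ^ n * y ^ ℓ = ∑ k ∈ Finset.range (ℓ + 1),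
      ((ℓ.choose k : K) * (-1) ^ k * raise (-2 * (n : K)) k / 2 ^ k) •
        (x ^ k * y ^ (ℓ - k) * g ^ n) := by
  have hconj : g ^ n * y ^ ℓ = (y + (n : K) • x) ^ ℓ * g ^ n := by
    rw [Nat.cast_smul_eq_nsmul]
    exact ((semiconjBy_pow_add_nsmul hgx hgy n).pow_right ℓ).eq
  rw [hconj, add_smul_pow_eq_sum_antidiagonal hrel, Nat.sum_antidiagonal_eq_sum_range_succ
    (fun i j => ℓ.choose i • (∏ k ∈ range i, ((n : K) - k / 2)) • (x ^ i * y ^ j)), sum_mul]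
  refine sum_congr rfl fun k _ => ?_
  rw [mul_assoc, mul_div_assoc, neg_one_pow_mul_raise_neg_two_mul_div h2, mul_smul,
    Nat.cast_smul_eq_nsmul, smul_mul_assoc, smul_mul_assoc]
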